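/- arXiv:1003.3392 — 5 statements merged into one kernel-verified Lean document; each statement's English description precedes it below -/
import Mathlib

section
/- Let a be a positive real number and let s be a complex number with 1 < Re(s) < 2. Then ∫_0^∞ t^(1−s)/(t + a)² dt = π·(1 − s)/(a^s · sin(πs)). -/
open Complex MeasureTheory Set

lemma aux_image : (fun x : ℝ => x / (1 - x)) '' Ioo 0 1 = Ioi 0 := by
  ext y
  constructor
  · rintro ⟨x, ⟨hx0, hx1⟩, rfl⟩
    exact div_pos hx0 (by linarith)
  · intro hy
    have hy0 : (0:ℝ) < y := hy
    have h1 : (1:ℝ) + y ≠ 0 := by positivity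
    refine ⟨y / (1 + y), ⟨div_pos hy0 (by linarith), ?_⟩, ?_⟩
    · rw [div_lt_one (by linarith)]; linarith
    · field_simp; ring

lemma aux_beta (s : ℂ) (hs1 : 1 < s.re) (hs2 : s.re < 2) :
    ∫ t in Ioi (0 : ℝ), (t : ℂ) ^ (1 - s) / ((t : ℂ) + 1) ^ 2
      = (Real.pi : ℂ) * (1 - s) / Complex.sin ((Real.pi : ℂ) * s) := by
  have key : ∫ t in Ioi (0 : ℝ), (t : ℂ) ^ (1 - s) / ((t : ℂ) + 1) ^ 2
      = Complex.betaIntegral (2 - s) s := by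
    have hderiv : ∀ x ∈ Ioo (0:ℝ) 1,
        HasDerivWithinAt (fun x : ℝ => x / (1 - x)) (((1 - x) ^ 2)⁻¹) (Ioo 0 1) x := by
      intro x hx
      have hx1 : (1:ℝ) - x ≠ 0 := by have h := hx.2; intro hc; nlinarith
      have h : HasDerivAt (fun x : ℝ => x / (1 - x))
          ((1 * (1 - x) - x * (0 - 1)) / (1 - x) ^ 2) x :=
        (hasDerivAt_id x).div ((hasDerivAt_const x (1:ℝ)).sub (hasDerivAt_id x)) hx1
      rw [show ((1 - x) ^ 2)⁻¹ = (1 * (1 - x) - x * (0 - 1)) / (1 - x) ^ 2 by ring]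
      exact h.hasDerivWithinAt
    have hinj : InjOn (fun x : ℝ => x / (1 - x)) (Ioo 0 1) := by
      intro x hx y hy h
      have hx1 : (1:ℝ) - x ≠ 0 := by have := hx.2; intro hc; nlinarith
      have hy1 : (1:ℝ) - y ≠ 0 := by have := hy.2; intro hc; nlinarith
      field_simp at h
      nlinarith [h]
    have himg := integral_image_eq_integral_abs_deriv_smul measurableSet_Ioo hderiv hinj
      (fun t : ℝ => (t : ℂ) ^ (1 - s) / ((t : ℂ) + 1) ^ 2)
    rw [aux_image] at himg
    rw [himg, Complex.betaIntegral, intervalIntegral.integral_of_le zero_le_one,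
      MeasureTheory.integral_Ioc_eq_integral_Ioo]
    refine setIntegral_congr_fun measurableSet_Ioo fun x hx => ?_
    obtain ⟨hx0, hx1⟩ := hx
    have h1x : (0:ℝ) < 1 - x := by linarith
    have hYne : ((1 - x : ℝ) : ℂ) ≠ 0 := Complex.ofReal_ne_zero.mpr h1x.ne'
    have hplus : ((x / (1 - x) : ℝ) : ℂ) + 1 = (((1 - x : ℝ) : ℂ))⁻¹ := by
      have hR : x / (1 - x) + 1 = (1 - x)⁻¹ := by field_simp; ring
      calc ((x / (1 - x) : ℝ) : ℂ) + 1 = ((x / (1 - x) + 1 : ℝ) : ℂ) := by push_cast; ring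
        _ = _ := by rw [hR, Complex.ofReal_inv]
    have hcpow : ((x / (1 - x) : ℝ) : ℂ) ^ (1 - s)
        = (x : ℂ) ^ (1 - s) * ((((1 - x : ℝ)) : ℂ) ^ (1 - s))⁻¹ := by
      rw [show (x / (1 - x) : ℝ) = x * (1 - x)⁻¹ from div_eq_mul_inv _ _,
        Complex.ofReal_mul, mul_cpow_ofReal_nonneg hx0.le (by positivity),
        Complex.ofReal_inv, inv_cpow]
      rw [Complex.arg_ofReal_of_nonneg h1x.le]
      exact Real.pi_ne_zero.symm
    rw [hplus, hcpow, abs_of_pos (by positivity : (0:ℝ) < ((1 - x) ^ 2)⁻¹), real_smul]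
    have hcast : ((((1 - x) ^ 2)⁻¹ : ℝ) : ℂ) = ((((1 - x : ℝ) : ℂ)) ^ 2)⁻¹ := by
      push_cast; ring
    rw [hcast, inv_pow]
    have hY2 : (((1 - x : ℝ) : ℂ)) ^ 2 ≠ 0 := pow_ne_zero _ hYne
    rw [show (2:ℂ) - s - 1 = 1 - s by ring, show (s:ℂ) - 1 = -(1 - s) by ring,
      Complex.cpow_neg]
    have h2 : ((1:ℂ) - (x:ℂ)) ≠ 0 := by push_cast at hYne; exact hYne
    have hcp : ((1:ℂ) - (x:ℂ)) ^ (1 - s) ≠ 0 :=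
      fun h => h2 ((Complex.cpow_eq_zero_iff _ _).mp h).1
    field_simp
    rw [Complex.ofReal_sub, Complex.ofReal_one, mul_div_assoc, div_self hcp, mul_one]
  rw [key]
  have h2s : 0 < (2 - s).re := by simp [Complex.sub_re]; linarith
  have hsre : 0 < s.re := by linarith
  have hbeta := Complex.Gamma_mul_Gamma_eq_betaIntegral h2s hsre
  rw [show (2 : ℂ) - s + s = 2 by ring] at hbeta
  have hG2 : Complex.Gamma 2 = 1 := by simp
  rw [hG2, one_mul] at hbeta
  rw [← hbeta]
  have h1s : (1 : ℂ) - s ≠ 0 := by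
    intro h
    have : s = 1 := by linear_combination -h
    rw [this] at hs1; simp at hs1
  have hGadd : Complex.Gamma (2 - s) = (1 - s) * Complex.Gamma (1 - s) := by
    have h := Complex.Gamma_add_one (1 - s) h1s
    rw [show (1:ℂ) - s + 1 = 2 - s by ring] at h
    rw [h]
  rw [hGadd]
  have hrefl := Complex.Gamma_mul_Gamma_one_sub s
  calc (1 - s) * Complex.Gamma (1 - s) * Complex.Gamma s
      = (1 - s) * (Complex.Gamma s * Complex.Gamma (1 - s)) := by ring
    _ = (1 - s) * ((Real.pi : ℂ) / Complex.sin ((Real.pi : ℂ) * s)) := by rw [hrefl]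
    _ = (Real.pi : ℂ) * (1 - s) / Complex.sin ((Real.pi : ℂ) * s) := by ring

theorem integral_pow_div_add_sq (a : ℝ) (ha : 0 < a) (s : ℂ) (hs1 : 1 < s.re) (hs2 : s.re < 2) :
    ∫ t in Ioi (0 : ℝ), (t : ℂ) ^ (1 - s) / ((t : ℂ) + (a : ℂ)) ^ 2
      = (Real.pi : ℂ) * (1 - s) / ((a : ℂ) ^ s * Complex.sin ((Real.pi : ℂ) * s)) := by
  have haC : (a : ℂ) ≠ 0 := by exact_mod_cast ha.ne'
  set g : ℝ → ℂ := fun t => (t : ℂ) ^ (1 - s) / ((t : ℂ) + (a : ℂ)) ^ 2 with hg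
  have hcomp := MeasureTheory.integral_comp_mul_left_Ioi g 0 ha
  rw [mul_zero] at hcomp
  have hmain : ∫ x in Ioi (0:ℝ), g (a * x)
      = ((a : ℂ) ^ (1 - s) / (a : ℂ) ^ (2:ℕ))
        * ((Real.pi : ℂ) * (1 - s) / Complex.sin ((Real.pi : ℂ) * s)) := by
    have hcongr : ∫ x in Ioi (0:ℝ), g (a * x)
        = ∫ x in Ioi (0:ℝ), ((a : ℂ) ^ (1 - s) / (a : ℂ) ^ (2:ℕ))
            * ((x : ℂ) ^ (1 - s) / ((x : ℂ) + 1) ^ 2) := by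
      refine setIntegral_congr_fun measurableSet_Ioi fun x hx => ?_
      have hx0 : (0:ℝ) < x := hx
      simp only [hg]
      have h1 : ((a * x : ℝ) : ℂ) ^ (1 - s) = (a : ℂ) ^ (1 - s) * (x : ℂ) ^ (1 - s) := by
        rw [Complex.ofReal_mul]; exact mul_cpow_ofReal_nonneg ha.le hx0.le _
      have h2 : ((a * x : ℝ) : ℂ) + (a : ℂ) = (a : ℂ) * ((x : ℂ) + 1) := by push_cast; ring
      rw [h1, h2, mul_pow]
      have hx1 : ((x : ℂ) + 1) ^ 2 ≠ 0 := by
        apply pow_ne_zero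
        intro hc
        have hr : ((x + 1 : ℝ) : ℂ) = 0 := by push_cast; linear_combination hc
        have : (x + 1 : ℝ) ≠ 0 := by positivity
        exact this (by exact_mod_cast hr)
      field_simp
    rw [hcongr, MeasureTheory.integral_const_mul, aux_beta s hs1 hs2]
  have hfull : ∫ t in Ioi (0:ℝ), g t = (a : ℂ) * ∫ x in Ioi (0:ℝ), g (a * x) := by
    rw [hcomp, real_smul, ← mul_assoc, Complex.ofReal_inv, mul_inv_cancel₀ haC, one_mul]
  rw [hfull, hmain, ← mul_assoc]
  have hpow : (a : ℂ) * ((a : ℂ) ^ (1 - s) / (a : ℂ) ^ (2:ℕ)) = ((a : ℂ) ^ s)⁻¹ := by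
    have hs0 : (a : ℂ) ^ s ≠ 0 := fun h => haC ((Complex.cpow_eq_zero_iff _ _).mp h).1
    rw [Complex.cpow_sub _ _ haC, Complex.cpow_one]
    field_simp
  rw [hpow, div_eq_mul_inv, div_eq_mul_inv, mul_inv]
  ring
end

section
/- Let s be a complex number with 1 < Re(s) < 2. Then (sin(πs/2)/((s−1)π)) · ∫_0^∞ t^(1−s) · (Σ_{n=1}^∞ 1/(t + 1/2 + 2n)²) dt = −ζ(s, 5/4)/(2^(s+1) · cos(πs/2)), where ζ(s, 5/4) = Σ_{n=0}^∞ (n + 5/4)^(−s) is the Hurwitz zeta function. -/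
open Complex MeasureTheory Set

lemma phi_deriv (a : ℝ) (ha : 0 < a) {x : ℝ} (hx : x ∈ Ioo (0:ℝ) 1) :
    HasDerivWithinAt (fun x : ℝ => a * x / (1 - x)) (a / (1 - x) ^ 2) (Ioo 0 1) x := by
  have h1 : (1 : ℝ) - x ≠ 0 := by have := hx.2; intro h; linarith [hx.2]
  have := ((hasDerivAt_id x).const_mul a).div ((hasDerivAt_id x).const_sub 1) h1
  have e : (a * 1 * (1 - id x) - a * id x * -1) / (1 - id x) ^ 2 = a / (1 - x) ^ 2 := by
    simp only [id]; ring
  exact HasDerivAt.hasDerivWithinAt (by rw [← e]; exact this)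

lemma phi_image (a : ℝ) (ha : 0 < a) :
    (fun x : ℝ => a * x / (1 - x)) '' Ioo 0 1 = Ioi 0 := by
  ext t
  simp only [mem_image, mem_Ioi, mem_Ioo]
  constructor
  · rintro ⟨x, ⟨hx0, hx1⟩, rfl⟩
    exact div_pos (by positivity) (by linarith)
  · intro ht
    refine ⟨t / (a + t), ⟨by positivity, ?_⟩, ?_⟩
    · rw [div_lt_one (by positivity)]; linarith
    · field_simp
      rw [add_sub_cancel_right, div_self ha.ne']

lemma phi_inj (a : ℝ) (ha : 0 < a) : InjOn (fun x : ℝ => a * x / (1 - x)) (Ioo 0 1) := by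
  intro x hx y hy h
  simp only at h
  have h1 : (1 : ℝ) - x ≠ 0 := by have := hx.2; intro h; linarith [hx.2]
  have h2 : (1 : ℝ) - y ≠ 0 := by intro h; linarith [hy.2]
  field_simp at h
  nlinarith [ha]

lemma integrand_eq (s : ℂ) (a : ℝ) (ha : 0 < a) {x : ℝ} (hx : x ∈ Ioo (0:ℝ) 1) :
    |a / (1 - x) ^ 2| • ((((a * x / (1 - x) : ℝ) : ℂ)) ^ (1 - s) /
        (((a * x / (1 - x) : ℝ) : ℂ) + (a : ℂ)) ^ 2)
      = (a : ℂ) ^ (-s) * ((x : ℂ) ^ (1 - s) * ((1 - x : ℝ) : ℂ) ^ (s - 1)) := by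
  obtain ⟨hx0, hx1⟩ := hx
  have h1 : (0:ℝ) < 1 - x := by linarith
  have h1' : ((1 - x : ℝ) : ℂ) ≠ 0 := by exact_mod_cast h1.ne'
  have haC : (a : ℂ) ≠ 0 := by exact_mod_cast ha.ne'
  -- denominator
  have hden : (((a * x / (1 - x) : ℝ) : ℂ) + (a : ℂ)) = (a : ℂ) / ((1 - x : ℝ) : ℂ) := by
    have : (a * x / (1 - x) + a : ℝ) = a / (1 - x) := by field_simp; ring
    calc (((a * x / (1 - x) : ℝ) : ℂ) + (a : ℂ)) = ((a * x / (1 - x) + a : ℝ) : ℂ) := by push_cast; ring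
    _ = ((a / (1 - x) : ℝ) : ℂ) := by rw [this]
    _ = (a : ℂ) / ((1 - x : ℝ) : ℂ) := by push_cast; ring
  -- numerator
  have hnum : (((a * x / (1 - x) : ℝ) : ℂ)) ^ (1 - s)
      = (a : ℂ) ^ (1 - s) * (x : ℂ) ^ (1 - s) * ((1 - x : ℝ) : ℂ) ^ (s - 1) := by
    have e1 : (a * x / (1 - x) : ℝ) = a * (x * (1 - x)⁻¹) := by ring
    rw [e1, Complex.ofReal_mul, mul_cpow_ofReal_nonneg ha.le (by positivity),
      Complex.ofReal_mul, mul_cpow_ofReal_nonneg hx0.le (by positivity),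
      Complex.ofReal_inv, inv_cpow _ _ (by
        rw [Complex.arg_ofReal_of_nonneg h1.le]; exact Real.pi_ne_zero.symm), ← cpow_neg]
    ring_nf
  have habs : |a / (1 - x) ^ 2| = a / (1 - x) ^ 2 := abs_of_pos (by positivity)
  rw [habs, hnum, hden, real_smul]
  have hpc : ((a / (1 - x) ^ 2 : ℝ) : ℂ) = (a : ℂ) / ((1 - x : ℝ) : ℂ) ^ 2 := by push_cast; ring
  rw [hpc]
  have ha1 : (a : ℂ) ^ (1 - s) = (a : ℂ) ^ (-s) * (a : ℂ) := by
    rw [show (1 : ℂ) - s = -s + 1 by ring, cpow_add _ _ haC, cpow_one]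
  have aux : ∀ A B E : ℂ, A ≠ 0 → B ≠ 0 → A / B ^ 2 * (E * A / (A / B) ^ 2) = E := by
    intro A B E hA hB; field_simp
  have e : (a:ℂ) ^ (-s) * (a:ℂ) * (x : ℂ) ^ (1 - s) * ((1 - x : ℝ) : ℂ) ^ (s - 1)
      = ((a:ℂ) ^ (-s) * ((x : ℂ) ^ (1 - s) * ((1 - x : ℝ) : ℂ) ^ (s - 1))) * (a:ℂ) := by ring
  rw [ha1, e]
  exact aux _ _ _ haC h1'

lemma betaIntegrandOn (s : ℂ) (hs1 : 1 < s.re) (hs2 : s.re < 2) :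
    IntegrableOn (fun x : ℝ => (x : ℂ) ^ (1 - s) * ((1 - x : ℝ) : ℂ) ^ (s - 1)) (Ioo (0:ℝ) 1) := by
  have h2s : 0 < (2 - s).re := by
    simp only [Complex.sub_re, Complex.ofReal_re]; norm_num; linarith
  have hb := Complex.betaIntegral_convergent h2s (by linarith : 0 < s.re)
  have hb' := (intervalIntegrable_iff_integrableOn_Ioc_of_le zero_le_one).mp hb
  have hb'' := hb'.mono_set Ioo_subset_Ioc_self
  refine hb''.congr_fun (fun x hx => ?_) measurableSet_Ioo
  push_cast
  norm_num [show (2:ℂ) - s - 1 = 1 - s by ring]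

lemma keyInt (s : ℂ) (hs1 : 1 < s.re) (hs2 : s.re < 2) (a : ℝ) (ha : 0 < a) :
    IntegrableOn (fun t : ℝ => (t : ℂ) ^ (1 - s) / ((t : ℂ) + (a : ℂ)) ^ 2) (Ioi (0:ℝ)) ∧
    ∫ t in Ioi (0:ℝ), (t : ℂ) ^ (1 - s) / ((t : ℂ) + (a : ℂ)) ^ 2
      = (a : ℂ) ^ (-s) * Complex.betaIntegral (2 - s) s := by
  set g : ℝ → ℂ := fun t => (t : ℂ) ^ (1 - s) / ((t : ℂ) + (a : ℂ)) ^ 2 with hg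
  have him := phi_image a ha
  have hderiv : ∀ x ∈ Ioo (0:ℝ) 1,
      HasDerivWithinAt (fun x : ℝ => a * x / (1 - x)) (a / (1 - x) ^ 2) (Ioo 0 1) x :=
    fun x hx => phi_deriv a ha hx
  have hinj := phi_inj a ha
  have heqon : EqOn (fun x : ℝ => |a / (1 - x) ^ 2| • g (a * x / (1 - x)))
      (fun x : ℝ => (a : ℂ) ^ (-s) * ((x : ℂ) ^ (1 - s) * ((1 - x : ℝ) : ℂ) ^ (s - 1)))
      (Ioo 0 1) := fun x hx => integrand_eq s a ha hx
  have hbint := (betaIntegrandOn s hs1 hs2).const_mul ((a : ℂ) ^ (-s))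
  constructor
  · rw [← him, integrableOn_image_iff_integrableOn_abs_deriv_smul measurableSet_Ioo hderiv hinj g]
    exact IntegrableOn.congr_fun hbint (fun x hx => (heqon hx).symm) measurableSet_Ioo
  · rw [← him, integral_image_eq_integral_abs_deriv_smul measurableSet_Ioo hderiv hinj g,
      setIntegral_congr_fun measurableSet_Ioo heqon, integral_const_mul]
    congr 1
    rw [Complex.betaIntegral, intervalIntegral.integral_of_le zero_le_one,
      integral_Ioc_eq_integral_Ioo]
    refine setIntegral_congr_fun measurableSet_Ioo (fun x hx => ?_)
    push_cast
    norm_num [show (2:ℂ) - s - 1 = 1 - s by ring]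

lemma betaVal (s : ℂ) (hs1 : 1 < s.re) (hs2 : s.re < 2) :
    Complex.betaIntegral (2 - s) s = (1 - s) * ((Real.pi : ℂ) / Complex.sin ((Real.pi : ℂ) * s)) := by
  have h2s : 0 < (2 - s).re := by
    simp only [Complex.sub_re, Complex.ofReal_re]; norm_num; linarith
  have hs0 : 0 < s.re := by linarith
  have hgb := Complex.Gamma_mul_Gamma_eq_betaIntegral h2s hs0
  have h2 : Complex.Gamma (2 - s + s) = 1 := by
    rw [show (2:ℂ) - s + s = 1 + 1 by ring, Complex.Gamma_add_one 1 one_ne_zero,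
      Complex.Gamma_one, mul_one]
  rw [h2, one_mul] at hgb
  have h1s : (1:ℂ) - s ≠ 0 := by
    intro h
    have := congrArg Complex.re h
    simp only [Complex.sub_re, Complex.one_re, Complex.zero_re] at this
    linarith
  have hG : Complex.Gamma (2 - s) = (1 - s) * Complex.Gamma (1 - s) := by
    rw [show (2:ℂ) - s = (1 - s) + 1 by ring, Complex.Gamma_add_one _ h1s]
  rw [← hgb, hG, mul_assoc, mul_comm (Complex.Gamma (1 - s)), Complex.Gamma_mul_Gamma_one_sub]

lemma normVal (σ : ℝ) (h1 : 1 < σ) (h2 : σ < 2) (a : ℝ) (ha : 0 < a) :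
    ∫ t in Ioi (0:ℝ), ‖(t : ℂ) ^ (1 - (σ:ℂ)) / ((t : ℂ) + (a : ℂ)) ^ 2‖
      = a ^ (-σ) * (Complex.betaIntegral (2 - (σ:ℂ)) (σ:ℂ)).re := by
  have h1' : 1 < (σ:ℂ).re := by simpa using h1
  have h2' : (σ:ℂ).re < 2 := by simpa using h2
  obtain ⟨hint, hval⟩ := keyInt (σ:ℂ) h1' h2' a ha
  have hofR : ∀ t ∈ Ioi (0:ℝ),
      (t : ℂ) ^ (1 - (σ:ℂ)) / ((t : ℂ) + (a : ℂ)) ^ 2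
        = ((t ^ (1 - σ) / (t + a) ^ 2 : ℝ) : ℂ) := by
    intro t ht
    rw [mem_Ioi] at ht
    rw [show (1 : ℂ) - (σ:ℂ) = ((1 - σ : ℝ) : ℂ) by push_cast; ring, ← Complex.ofReal_cpow ht.le]
    push_cast
    ring
  have heq : EqOn (fun t : ℝ => ‖(t : ℂ) ^ (1 - (σ:ℂ)) / ((t : ℂ) + (a : ℂ)) ^ 2‖)
      (fun t : ℝ => ((t : ℂ) ^ (1 - (σ:ℂ)) / ((t : ℂ) + (a : ℂ)) ^ 2).re) (Ioi 0) := by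
    intro t ht
    have htpos : (0:ℝ) < t := ht
    simp only
    rw [hofR t ht]
    simp only [Complex.norm_real, Real.norm_eq_abs, Complex.ofReal_re]
    refine abs_of_nonneg ?_
    positivity
  rw [setIntegral_congr_fun measurableSet_Ioi heq]
  have := integral_re hint
  simp only [RCLike.re_to_complex] at this
  rw [this, hval]
  rw [show -(σ:ℂ) = ((-σ : ℝ) : ℂ) by push_cast; ring, ← Complex.ofReal_cpow ha.le]
  simp [Complex.mul_re]

lemma sinhalf_ne (s : ℂ) (hs1 : 1 < s.re) (hs2 : s.re < 2) :
    Complex.sin ((Real.pi : ℂ) * s / 2) ≠ 0 := by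
  rw [Complex.sin_ne_zero_iff]
  intro k h
  have hπ : (Real.pi : ℂ) ≠ 0 := Complex.ofReal_ne_zero.mpr Real.pi_ne_zero
  have hs : s = 2 * k := by
    have h' : (Real.pi : ℂ) * s = (Real.pi : ℂ) * (2 * k) := by linear_combination 2 * h
    exact mul_left_cancel₀ hπ h'
  have : s.re = 2 * (k : ℝ) := by rw [hs]; push_cast; simp
  rw [this] at hs1 hs2
  have h1 : (1:ℤ) < 2 * k := by exact_mod_cast hs1
  have h2 : (2:ℤ) * k < 2 := by exact_mod_cast hs2
  omega

lemma coshalf_ne (s : ℂ) (hs1 : 1 < s.re) (hs2 : s.re < 2) :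
    Complex.cos ((Real.pi : ℂ) * s / 2) ≠ 0 := by
  rw [Complex.cos_ne_zero_iff]
  intro k h
  have hπ : (Real.pi : ℂ) ≠ 0 := Complex.ofReal_ne_zero.mpr Real.pi_ne_zero
  have hs : s = 2 * k + 1 := by
    have h' : (Real.pi : ℂ) * s = (Real.pi : ℂ) * (2 * k + 1) := by linear_combination 2 * h
    exact mul_left_cancel₀ hπ h'
  have : s.re = 2 * (k : ℝ) + 1 := by rw [hs]; push_cast; simp
  rw [this] at hs1 hs2
  have h1 : (1:ℤ) < 2 * k + 1 := by exact_mod_cast hs1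
  have h2 : (2:ℤ) * k + 1 < 2 := by exact_mod_cast hs2
  omega

lemma pnat_tsum_eq {α : Type*} [AddCommMonoid α] [TopologicalSpace α] (f : ℕ+ → α) :
    ∑' n : ℕ+, f n = ∑' m : ℕ, f m.succPNat := by
  rw [← Equiv.pnatEquivNat.symm.tsum_eq]
  rfl

lemma summable_pnat_rpow {σ : ℝ} (h : 1 < σ) : Summable (fun n : ℕ+ => ((n:ℕ):ℝ) ^ (-σ)) := by
  have hnat : Summable (fun n : ℕ => (n:ℝ) ^ (-σ)) := Real.summable_nat_rpow.mpr (by linarith)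
  rw [← Equiv.pnatEquivNat.symm.summable_iff]
  exact hnat.comp_injective Nat.succ_injective

lemma betaRe_nonneg (σ : ℝ) (h1 : 1 < σ) (h2 : σ < 2) :
    0 ≤ (Complex.betaIntegral (2 - (σ:ℂ)) (σ:ℂ)).re := by
  have := normVal σ h1 h2 1 one_pos
  rw [Real.one_rpow, one_mul] at this
  rw [← this]
  exact integral_nonneg (fun t => norm_nonneg _)

theorem integral_J_term' (s : ℂ) (hs1 : 1 < s.re) (hs2 : s.re < 2) :
    Complex.sin ((Real.pi : ℂ) * s / 2) / ((s - 1) * (Real.pi : ℂ)) *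
        ∫ t in Ioi (0 : ℝ), (t : ℂ) ^ (1 - s) * ∑' n : ℕ+, 1 / ((t : ℂ) + 1 / 2 + 2 * (n : ℕ)) ^ 2
      = -(∑' n : ℕ, ((n : ℂ) + 5 / 4) ^ (-s)) /
          ((2 : ℂ) ^ (s + 1) * Complex.cos ((Real.pi : ℂ) * s / 2)) := by
  set σ := s.re with hσ
  have hσ1 : 1 < σ := hs1
  have hσ2 : σ < 2 := hs2
  have hc : ∀ n : ℕ+, (0:ℝ) < 1/2 + 2*(n:ℕ) := fun n => by positivity
  -- representation of each summand
  have hFrepr : ∀ n : ℕ+, (fun t : ℝ => (t : ℂ) ^ (1 - s) * (1 / ((t : ℂ) + 1 / 2 + 2 * (n : ℕ)) ^ 2))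
      = fun t : ℝ => (t : ℂ) ^ (1 - s) / ((t : ℂ) + ((1/2 + 2*(n:ℕ) : ℝ) : ℂ)) ^ 2 := by
    intro n; funext t; push_cast; ring
  have hF_int : ∀ n : ℕ+, IntegrableOn
      (fun t : ℝ => (t : ℂ) ^ (1 - s) * (1 / ((t : ℂ) + 1 / 2 + 2 * (n : ℕ)) ^ 2)) (Ioi (0:ℝ)) := by
    intro n; rw [hFrepr n]; exact (keyInt s hs1 hs2 _ (hc n)).1
  -- norm integrals
  set B : ℝ := (Complex.betaIntegral (2 - (σ:ℂ)) (σ:ℂ)).re with hB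
  have hBnn : 0 ≤ B := betaRe_nonneg σ hσ1 hσ2
  have hnormint : ∀ n : ℕ+,
      ∫ t in Ioi (0:ℝ), ‖(t : ℂ) ^ (1 - s) * (1 / ((t : ℂ) + 1 / 2 + 2 * (n : ℕ)) ^ 2)‖
        = (1/2 + 2*(n:ℕ) : ℝ) ^ (-σ) * B := by
    intro n
    rw [← normVal σ hσ1 hσ2 _ (hc n)]
    refine setIntegral_congr_fun measurableSet_Ioi (fun t ht => ?_)
    have ht' : (0:ℝ) < t := ht
    have hX : (t:ℂ) + 1/2 + 2*((n:ℕ):ℂ) = (t:ℂ) + ((1/2 + 2*(n:ℕ) : ℝ) : ℂ) := by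
      push_cast; ring
    simp only [hX, mul_one_div, norm_div,
      Complex.norm_cpow_eq_rpow_re_of_pos ht']
    norm_num
    rw [hσ]
  have hF_sum : Summable (fun n : ℕ+ =>
      ∫ t in Ioi (0:ℝ), ‖(t : ℂ) ^ (1 - s) * (1 / ((t : ℂ) + 1 / 2 + 2 * (n : ℕ)) ^ 2)‖) := by
    simp only [hnormint]
    refine Summable.of_nonneg_of_le (fun n => by positivity) (fun n => ?_)
      (((summable_pnat_rpow hσ1)).mul_right B)
    refine mul_le_mul_of_nonneg_right ?_ hBnn
    refine Real.rpow_le_rpow_of_nonpos ?_ ?_ (by linarith)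
    · exact_mod_cast n.pos
    · have : (1:ℝ) ≤ (n:ℕ) := by exact_mod_cast n.one_le
      linarith
  -- swap sum and integral
  have hswap : (∫ t in Ioi (0 : ℝ), (t : ℂ) ^ (1 - s) *
        ∑' n : ℕ+, 1 / ((t : ℂ) + 1 / 2 + 2 * (n : ℕ)) ^ 2)
      = ∑' n : ℕ+, ∫ t in Ioi (0:ℝ),
          (t : ℂ) ^ (1 - s) * (1 / ((t : ℂ) + 1 / 2 + 2 * (n : ℕ)) ^ 2) := by
    calc ∫ t in Ioi (0 : ℝ), (t : ℂ) ^ (1 - s) * ∑' n : ℕ+, 1 / ((t : ℂ) + 1 / 2 + 2 * (n : ℕ)) ^ 2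
        = ∫ t in Ioi (0:ℝ), ∑' n : ℕ+, (t : ℂ) ^ (1 - s) * (1 / ((t : ℂ) + 1 / 2 + 2 * (n : ℕ)) ^ 2) := by
          refine setIntegral_congr_fun measurableSet_Ioi (fun t ht => ?_)
          exact (tsum_mul_left).symm
      _ = ∑' n : ℕ+, ∫ t in Ioi (0:ℝ),
            (t : ℂ) ^ (1 - s) * (1 / ((t : ℂ) + 1 / 2 + 2 * (n : ℕ)) ^ 2) :=
          (MeasureTheory.integral_tsum_of_summable_integral_norm hF_int hF_sum).symm
  -- value of each integral
  have hval : ∀ n : ℕ+, (∫ t in Ioi (0:ℝ),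
        (t : ℂ) ^ (1 - s) * (1 / ((t : ℂ) + 1 / 2 + 2 * (n : ℕ)) ^ 2))
      = ((1/2 + 2*(n:ℕ) : ℝ) : ℂ) ^ (-s) * Complex.betaIntegral (2 - s) s := by
    intro n
    rw [show (fun t : ℝ => (t : ℂ) ^ (1 - s) * (1 / ((t : ℂ) + 1 / 2 + 2 * (n : ℕ)) ^ 2))
      = fun t : ℝ => (t : ℂ) ^ (1 - s) / ((t : ℂ) + ((1/2 + 2*(n:ℕ) : ℝ) : ℂ)) ^ 2 from hFrepr n]
    exact (keyInt s hs1 hs2 _ (hc n)).2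
  -- the sum of cpow terms
  have hsum : ∑' n : ℕ+, ((1/2 + 2*(n:ℕ) : ℝ) : ℂ) ^ (-s)
      = (2:ℂ) ^ (-s) * ∑' n : ℕ, ((n : ℂ) + 5 / 4) ^ (-s) := by
    have step1 : ∀ n : ℕ+, ((1/2 + 2*(n:ℕ) : ℝ) : ℂ) ^ (-s)
        = (2:ℂ) ^ (-s) * (((n:ℕ) : ℂ) + 1/4) ^ (-s) := by
      intro n
      have e : (1/2 + 2*(n:ℕ) : ℝ) = 2 * ((n:ℕ) + 1/4) := by ring
      rw [e, Complex.ofReal_mul, mul_cpow_ofReal_nonneg (by norm_num) (by positivity)]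
      push_cast
      norm_num
    simp only [step1]
    rw [tsum_mul_left]
    congr 1
    rw [pnat_tsum_eq (fun n : ℕ+ => (((n:ℕ) : ℂ) + 1/4) ^ (-s))]
    refine tsum_congr (fun m => ?_)
    have : ((m.succPNat : ℕ) : ℂ) = (m : ℂ) + 1 := by
      rw [Nat.succPNat_coe]; push_cast; ring
    rw [this, show ((m:ℂ) + 1 + 1/4) = (m:ℂ) + 5/4 by ring]
  rw [hswap]
  simp only [hval]
  rw [tsum_mul_right, hsum, betaVal s hs1 hs2]
  -- final algebra
  set Z : ℂ := ∑' n : ℕ, ((n : ℂ) + 5 / 4) ^ (-s) with hZ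
  have hπ : (Real.pi : ℂ) ≠ 0 := Complex.ofReal_ne_zero.mpr Real.pi_ne_zero
  have hsin := sinhalf_ne s hs1 hs2
  have hcos := coshalf_ne s hs1 hs2
  have hs1' : s - 1 ≠ 0 := by
    intro h
    have := congrArg Complex.re h
    simp only [Complex.sub_re, Complex.one_re, Complex.zero_re] at this
    linarith
  have h2pow : (2:ℂ) ^ (-s) * (2:ℂ) ^ (s+1) = 2 := by
    rw [← Complex.cpow_add _ _ two_ne_zero]
    norm_num
  have h2ne : (2:ℂ) ^ (s+1) ≠ 0 := by
    intro h
    rw [h, mul_zero] at h2pow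
    norm_num at h2pow
  rw [show (Real.pi : ℂ) * s = 2 * ((Real.pi : ℂ) * s / 2) by ring, Complex.sin_two_mul]
  field_simp
  ring_nf
  rw [show (1:ℂ) + s = s + 1 by ring]
  linear_combination ((1 - s) * Z) * h2pow
end

section
/- Let s be a complex number with −1 < Re(s) < 1. Then ∫_0^∞ t^(−s)/(t² + 1/4) dt = π·2^s/cos(πs/2). -/
open Complex MeasureTheory Set

lemma mellin_one_div_one_add_aux (a : ℂ) (h1 : 0 < a.re) (h2 : a.re < 1) :
    ∫ v in Ioi (0 : ℝ), (v : ℂ) ^ (a - 1) / (1 + (v : ℂ))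
      = (Real.pi : ℂ) / Complex.sin ((Real.pi : ℂ) * a) := by
  have himg : (fun x : ℝ => x / (1 - x)) '' Ioo 0 1 = Ioi 0 := by
    ext y
    constructor
    · rintro ⟨x, ⟨hx0, hx1⟩, rfl⟩
      exact div_pos hx0 (by linarith)
    · intro hy
      rw [mem_Ioi] at hy
      refine ⟨y / (1 + y), ⟨div_pos hy (by linarith), ?_⟩, ?_⟩
      · rw [div_lt_one (by linarith)]; linarith
      · field_simp; ring
  have hderiv : ∀ x ∈ Ioo (0 : ℝ) 1,
      HasDerivWithinAt (fun x : ℝ => x / (1 - x)) (((1 - x) ^ 2)⁻¹) (Ioo 0 1) x := by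
    intro x hx
    have hne : (1 : ℝ) - x ≠ 0 := (by linarith [hx.2] : (0:ℝ) < 1 - x).ne'
    have := (hasDerivAt_id x).div ((hasDerivAt_const x (1:ℝ)).sub (hasDerivAt_id x)) hne
    convert this.hasDerivWithinAt using 1
    · rfl
    · rfl
    · rfl
    · simp only [Pi.sub_apply, id]; ring
  have hinj : InjOn (fun x : ℝ => x / (1 - x)) (Ioo 0 1) := by
    intro x hx y hy h
    have hxne : (1 : ℝ) - x ≠ 0 := (by linarith [hx.2] : (0:ℝ) < 1 - x).ne'
    have hyne : (1 : ℝ) - y ≠ 0 := (by linarith [hy.2] : (0:ℝ) < 1 - y).ne'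
    field_simp at h
    nlinarith [h]
  have hcov := integral_image_eq_integral_abs_deriv_smul measurableSet_Ioo hderiv hinj
    (fun v : ℝ => (v : ℂ) ^ (a - 1) / (1 + (v : ℂ)))
  rw [himg] at hcov
  rw [hcov]
  have hcongr : ∫ x in Ioo (0:ℝ) 1,
      |((1 - x) ^ 2)⁻¹| • ((((x / (1 - x) : ℝ)) : ℂ) ^ (a - 1) / (1 + ((x / (1 - x) : ℝ) : ℂ)))
      = ∫ x in Ioo (0:ℝ) 1, (x : ℂ) ^ (a - 1) * (1 - (x : ℂ)) ^ (1 - a - 1) := by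
    refine setIntegral_congr_fun measurableSet_Ioo fun x hx => ?_
    obtain ⟨hx0, hx1⟩ := hx
    have h1x : (0 : ℝ) < 1 - x := by linarith
    have h1xne : ((1 : ℂ) - (x : ℂ)) ≠ 0 := by
      rw [show (1 : ℂ) - (x : ℂ) = ((1 - x : ℝ) : ℂ) by push_cast; ring]
      exact_mod_cast h1x.ne'
    have habs : |((1 - x) ^ 2)⁻¹| = ((1 - x) ^ 2)⁻¹ := abs_of_pos (by positivity)
    have hsplit : (((x / (1 - x) : ℝ)) : ℂ) ^ (a - 1)
        = (x : ℂ) ^ (a - 1) * ((1 : ℂ) - (x : ℂ)) ^ (-(a - 1)) := by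
      rw [show (x / (1 - x) : ℝ) = x * (1 - x)⁻¹ by ring, Complex.ofReal_mul,
        Complex.mul_cpow_ofReal_nonneg hx0.le (by positivity), Complex.ofReal_inv,
        Complex.inv_cpow _ _ (by
          rw [Complex.arg_ofReal_of_nonneg h1x.le]; exact Real.pi_ne_zero.symm),
        ← Complex.cpow_neg]
      norm_num
    have hden : (1 : ℂ) + ((x / (1 - x) : ℝ) : ℂ) = ((1 - x : ℝ) : ℂ)⁻¹ := by
      have hr : (1 : ℝ) + x / (1 - x) = (1 - x)⁻¹ := by field_simp; ring
      rw [← Complex.ofReal_inv, ← hr]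
      push_cast
      ring
    rw [habs, real_smul, hsplit, hden]
    push_cast
    rw [div_eq_mul_inv, inv_inv]
    have hpow : ((1 : ℂ) - (x : ℂ)) ^ (-(a - 1)) * ((1 : ℂ) - x) * (((1:ℂ) - x) ^ 2)⁻¹
        = ((1 : ℂ) - (x : ℂ)) ^ (1 - a - 1) := by
      have e1 : ((1 : ℂ) - (x : ℂ)) ^ (1 - a - 1) = ((1:ℂ) - x) ^ (-(a-1)) * ((1:ℂ) - x) ^ (-(1:ℂ)) := by
        rw [← Complex.cpow_add _ _ h1xne]; congr 1; ring
      rw [e1, Complex.cpow_neg_one]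
      field_simp
    linear_combination ((x:ℂ) ^ (a - 1)) * hpow
  rw [hcongr]
  have hbeta : ∫ x in Ioo (0:ℝ) 1, (x : ℂ) ^ (a - 1) * (1 - (x : ℂ)) ^ (1 - a - 1)
      = Complex.betaIntegral a (1 - a) := by
    rw [Complex.betaIntegral, intervalIntegral.integral_of_le zero_le_one,
      MeasureTheory.integral_Ioc_eq_integral_Ioo]
  rw [hbeta]
  have ht : 0 < (1 - a).re := by simp [Complex.sub_re]; linarith
  have := Complex.Gamma_mul_Gamma_eq_betaIntegral h1 ht
  rw [show a + (1 - a) = 1 by ring, Complex.Gamma_one, one_mul] at this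
  rw [← this, Complex.Gamma_mul_Gamma_one_sub]

theorem integral_cpow_div_sq_add_quarter (s : ℂ) (hs1 : -1 < s.re) (hs2 : s.re < 1) :
    ∫ t in Ioi (0 : ℝ), (t : ℂ) ^ (-s) / ((t : ℂ) ^ 2 + 1 / 4)
      = (Real.pi : ℂ) * (2 : ℂ) ^ s / Complex.cos ((Real.pi : ℂ) * s / 2) := by
  set F : ℝ → ℂ := fun v => 1 / (1 + (v : ℂ)) with hF
  have hre : ((1 - s) / 2).re = (1 - s.re) / 2 := by
    rw [show (1 - s) / 2 = (1 - s) * (2⁻¹ : ℝ) by push_cast; ring]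
    simp [Complex.sub_re]
    ring
  have hmF : mellin F ((1 - s) / 2)
      = (Real.pi : ℂ) / Complex.sin ((Real.pi : ℂ) * ((1 - s) / 2)) := by
    rw [mellin]
    simp_rw [smul_eq_mul, hF, mul_one_div]
    exact mellin_one_div_one_add_aux _ (by rw [hre]; linarith) (by rw [hre]; linarith)
  have step0 : (∫ t in Ioi (0 : ℝ), (t : ℂ) ^ (-s) / ((t : ℂ) ^ 2 + 1 / 4))
      = mellin (fun t : ℝ => (4 : ℂ) * F ((2 * t) ^ (2:ℝ))) (1 - s) := by
    rw [mellin]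
    refine setIntegral_congr_fun measurableSet_Ioi fun t ht => ?_
    rw [mem_Ioi] at ht
    have h2t : ((2 * t) ^ (2:ℝ) : ℝ) = 4 * t ^ 2 := by
      rw [show (2:ℝ) = ((2:ℕ):ℝ) by norm_num, Real.rpow_natCast]; ring
    have hdenne : ((t : ℂ) ^ 2 + 1 / 4) ≠ 0 := by
      intro h
      have : ((t:ℂ)^2 + 1/4).re = 0 := by rw [h]; simp
      simp [Complex.add_re, ← Complex.ofReal_pow] at this
      nlinarith
    have hdenne' : ((t : ℂ) ^ 2 + 4⁻¹) ≠ 0 := by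
      rw [show ((t:ℂ)^2 + 4⁻¹) = (t:ℂ)^2 + 1/4 by norm_num]; exact hdenne
    have hdenne2 : ((1:ℂ) + ((4 * t ^ 2 : ℝ) : ℂ)) ≠ 0 := by
      rw [show ((1:ℂ) + ((4 * t ^ 2 : ℝ) : ℂ)) = 4 * ((t:ℂ)^2 + 1/4) by push_cast; ring]
      exact mul_ne_zero (by norm_num) hdenne
    rw [smul_eq_mul, hF, h2t]
    rw [show (1 - s - 1 : ℂ) = -s by ring]
    have hkey : ((1:ℂ) + ((4 * t ^ 2 : ℝ) : ℂ)) = 4 * ((t:ℂ)^2 + 1/4) := by push_cast; ring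
    rw [div_eq_mul_inv]
    congr 1
    show ((t:ℂ)^2 + 1/4)⁻¹ = 4 * (1 / (1 + ((4 * t ^ 2 : ℝ) : ℂ)))
    rw [hkey, mul_one_div, eq_div_iff (mul_ne_zero (by norm_num : (4:ℂ) ≠ 0) hdenne)]
    rw [mul_comm (4:ℂ) ((t:ℂ)^2 + 1/4), ← mul_assoc, inv_mul_cancel₀ hdenne, one_mul]
  rw [step0]
  have step1 : mellin (fun t : ℝ => (4 : ℂ) * F ((2 * t) ^ (2:ℝ))) (1 - s)
      = (4 : ℂ) * mellin (fun t : ℝ => F ((2 * t) ^ (2:ℝ))) (1 - s) := by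
    simpa using mellin_const_smul (fun t : ℝ => F ((2 * t) ^ (2:ℝ))) (1 - s) (4 : ℂ)
  rw [step1]
  have step2 : mellin (fun t : ℝ => F ((2 * t) ^ (2:ℝ))) (1 - s)
      = (2 : ℂ) ^ (-(1 - s)) • mellin (fun u : ℝ => F (u ^ (2:ℝ))) (1 - s) := by
    exact mellin_comp_mul_left (fun u : ℝ => F (u ^ (2:ℝ))) (1 - s) two_pos
  rw [step2]
  have step3 : mellin (fun u : ℝ => F (u ^ (2:ℝ))) (1 - s)
      = |(2:ℝ)|⁻¹ • mellin F ((1 - s) / 2) := by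
    exact mellin_comp_rpow F (1 - s) 2
  rw [step3, hmF]
  have hsin : Complex.sin ((Real.pi : ℂ) * ((1 - s) / 2))
      = Complex.cos ((Real.pi : ℂ) * s / 2) := by
    rw [show (Real.pi : ℂ) * ((1 - s) / 2) = (Real.pi : ℂ) / 2 - (Real.pi : ℂ) * s / 2 by ring]
    exact Complex.sin_pi_div_two_sub _
  rw [hsin]
  have h2 : (4 : ℂ) * (2 : ℂ) ^ (-(1 - s)) * (2 : ℂ)⁻¹ = (2 : ℂ) ^ s := by
    rw [show -(1 - s) = s + (-1) by ring, Complex.cpow_add _ _ two_ne_zero,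
      Complex.cpow_neg_one]
    ring
  simp only [smul_eq_mul, Complex.real_smul, Complex.ofReal_inv, Complex.ofReal_ofNat, _root_.abs_two]
  linear_combination ((Real.pi : ℂ) / Complex.cos ((Real.pi : ℂ) * s / 2)) * h2
end

section
/- Let s be a complex number with 0 < Re(s) < 1. Then ∫_0^∞ 1/((i·y − 1/2)·y^s) dy = −i·π·2^s·e^(−iπs/2)/sin(πs). -/
open Complex MeasureTheory Set

-- Step A: beta value
lemma beta_val (c : ℂ) (h1 : 0 < c.re) (h2 : c.re < 1) :
    Complex.betaIntegral c (1 - c) = ↑Real.pi / Complex.sin (↑Real.pi * c) := by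
  have hv : 0 < (1 - c).re := by simp [Complex.sub_re]; linarith
  have h := Complex.Gamma_mul_Gamma_eq_betaIntegral h1 hv
  rw [add_sub_cancel, Complex.Gamma_one, one_mul] at h
  rw [← h, Complex.Gamma_mul_Gamma_one_sub]

lemma aux_one (c : ℂ) (h1 : 0 < c.re) (h2 : c.re < 1) :
    ∫ v in Ioi (0:ℝ), (v:ℂ) ^ (c - 1) / ((v:ℂ) + 1)
      = ↑Real.pi / Complex.sin (↑Real.pi * c) := by
  rw [← beta_val c h1 h2]
  set g : ℝ → ℂ := fun x => (x:ℂ) ^ (c - 1) * ((1:ℂ) - x) ^ (-c) with hg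
  have hbeta : Complex.betaIntegral c (1 - c) = ∫ x in Ioo (0:ℝ) 1, g x := by
    rw [Complex.betaIntegral, intervalIntegral.integral_of_le zero_le_one,
      ← MeasureTheory.integral_Ioc_eq_integral_Ioo]
    congr 1
    ext x
    simp [hg, sub_sub_cancel_left]
  rw [hbeta]
  have himg : (fun v : ℝ => v / (1 + v)) '' Ioi 0 = Ioo (0:ℝ) 1 := by
    ext t
    constructor
    · rintro ⟨v, hv, rfl⟩
      have hv' : (0:ℝ) < v := hv
      constructor
      · positivity
      · rw [div_lt_one (by positivity)]; linarith
    · rintro ⟨ht0, ht1⟩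
      have h1t : (0:ℝ) < 1 - t := by linarith
      refine ⟨t / (1 - t), mem_Ioi.mpr (div_pos ht0 h1t), ?_⟩
      field_simp
      ring
  have hderiv : ∀ v ∈ Ioi (0:ℝ), HasDerivWithinAt (fun v : ℝ => v / (1 + v))
      ((1 + v)^2)⁻¹ (Ioi 0) v := by
    intro v hv
    have hv' : (0:ℝ) < v := hv
    have hne : (1:ℝ) + v ≠ 0 := by positivity
    have h := ((hasDerivAt_id v).div ((hasDerivAt_id v).const_add 1) hne).hasDerivWithinAt
      (s := Ioi 0)
    simp only [id_eq, one_mul, mul_one, add_sub_cancel_right, one_div] at h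
    exact h
  have hinj : InjOn (fun v : ℝ => v / (1 + v)) (Ioi 0) := by
    intro a ha b hb h
    have ha' : (0:ℝ) < a := ha
    have hb' : (0:ℝ) < b := hb
    field_simp at h
    nlinarith [h]
  rw [← himg, integral_image_eq_integral_abs_deriv_smul measurableSet_Ioi hderiv hinj g]
  refine setIntegral_congr_fun measurableSet_Ioi fun v hv => ?_
  have hv' : (0:ℝ) < v := hv
  have hw : (0:ℝ) < 1 + v := by linarith
  have hwC : ((1 + v : ℝ) : ℂ) ≠ 0 := by exact_mod_cast hw.ne'
  have hwC' : (1 : ℂ) + (v : ℂ) ≠ 0 := by push_cast at hwC; exact hwC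
  have harg : ((1 + v : ℝ) : ℂ).arg ≠ Real.pi := by
    rw [Complex.arg_ofReal_of_nonneg hw.le]
    exact Ne.symm Real.pi_ne_zero
  have habs : |((1 + v)^2)⁻¹| = ((1+v)^2)⁻¹ := abs_of_pos (by positivity)
  rw [habs, hg]
  have e1 : ((v / (1 + v) : ℝ) : ℂ) ^ (c - 1)
      = (v:ℂ) ^ (c - 1) * ((1 + v : ℝ) : ℂ) ^ (1 - c) := by
    rw [div_eq_mul_inv, Complex.ofReal_mul,
      mul_cpow_ofReal_nonneg hv'.le (by positivity), Complex.ofReal_inv,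
      Complex.inv_cpow _ _ harg, ← Complex.cpow_neg, neg_sub]
  have e2 : ((1:ℂ) - ((v / (1 + v) : ℝ) : ℂ)) ^ (-c) = ((1 + v : ℝ) : ℂ) ^ c := by
    have h0 : ((1:ℂ) - ((v / (1 + v) : ℝ) : ℂ)) = (((1 + v : ℝ))⁻¹ : ℝ) := by
      push_cast
      field_simp
      ring
    rw [h0, Complex.ofReal_inv, Complex.inv_cpow _ _ harg, ← Complex.cpow_neg, neg_neg]
  have e3 : ((1 + v : ℝ) : ℂ) ^ (1 - c) * ((1 + v : ℝ) : ℂ) ^ c = ((1 + v : ℝ) : ℂ) := by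
    rw [← Complex.cpow_add _ _ hwC, sub_add_cancel, Complex.cpow_one]
  simp only [real_smul]
  rw [e1, e2, mul_assoc ((v:ℂ) ^ (c-1)), e3]
  push_cast
  set A := (v:ℂ) ^ (c - 1)
  field_simp [hwC']
  rw [add_comm (v:ℂ) 1, mul_div_cancel_right₀ _ hwC']

lemma aux_two (c : ℂ) (h1 : 0 < c.re) (h2 : c.re < 1) {a : ℝ} (ha : 0 < a) :
    ∫ u in Ioi (0:ℝ), (u:ℂ) ^ (c - 1) / ((u:ℂ) + a)
      = (a:ℂ) ^ (c - 1) * (↑Real.pi / Complex.sin (↑Real.pi * c)) := by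
  have haC : (a:ℂ) ≠ 0 := ofReal_ne_zero.mpr ha.ne'
  have h0 : mellin (fun v : ℝ => ((v:ℂ) + 1)⁻¹) c = ↑Real.pi / Complex.sin (↑Real.pi * c) := by
    rw [← aux_one c h1 h2, mellin]
    refine setIntegral_congr_fun measurableSet_Ioi fun v hv => ?_
    rw [smul_eq_mul, div_eq_mul_inv]
  have h3 := mellin_comp_mul_left (fun v : ℝ => ((v:ℂ) + 1)⁻¹) c (inv_pos.mpr ha)
  have h4 : (∫ u in Ioi (0:ℝ), (u:ℂ) ^ (c - 1) / ((u:ℂ) + a))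
      = mellin (fun u : ℝ => (a:ℂ)⁻¹ • (((a⁻¹ * u : ℝ):ℂ) + 1)⁻¹) c := by
    rw [mellin]
    refine setIntegral_congr_fun measurableSet_Ioi fun u hu => ?_
    have hu' : (0:ℝ) < u := hu
    have huC : ((u:ℂ) + a) ≠ 0 := by
      intro h
      have := congrArg Complex.re h
      simp [Complex.add_re] at this
      linarith
    rw [smul_eq_mul, smul_eq_mul]
    push_cast
    rw [div_eq_mul_inv]
    congr 1
    rw [← mul_inv]
    congr 1
    field_simp
  rw [h4, mellin_const_smul, h3, h0]
  have e5 : ((a⁻¹ : ℝ) : ℂ) ^ (-c) = (a:ℂ) ^ c := by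
    rw [Complex.ofReal_inv, Complex.inv_cpow _ _ (by
      rw [Complex.arg_ofReal_of_nonneg ha.le]; exact Ne.symm Real.pi_ne_zero),
      ← Complex.cpow_neg, neg_neg]
  rw [e5, smul_eq_mul, smul_eq_mul, ← mul_assoc]
  congr 1
  rw [Complex.cpow_sub _ _ haC, Complex.cpow_one]
  ring

lemma cpow_real_pos (r : ℝ) (hr : 0 < r) (w : ℂ) :
    (r:ℂ) ^ w = Complex.exp ((Real.log r : ℂ) * w) := by
  rw [Complex.cpow_def_of_ne_zero (ofReal_ne_zero.mpr hr.ne'), Complex.ofReal_log hr.le]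

lemma aux_three (c : ℂ) (h1 : 0 < c.re) (h2 : c.re < 2) :
    ∫ y in Ioi (0:ℝ), (y:ℂ) ^ (c - 1) / ((y:ℂ)^2 + 1/4)
      = (2:ℂ) ^ (1 - c) * (↑Real.pi / Complex.sin (↑Real.pi * c / 2)) := by
  have key : (∫ y in Ioi (0:ℝ), (y:ℂ) ^ (c - 1) / ((y:ℂ)^2 + 1/4))
      = mellin (fun t : ℝ => (((t ^ (2:ℝ) : ℝ) : ℂ) + ((1/4 : ℝ) : ℂ))⁻¹) c := by
    rw [mellin]
    refine setIntegral_congr_fun measurableSet_Ioi fun t ht => ?_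
    have ht' : (0:ℝ) < t := ht
    rw [smul_eq_mul, Real.rpow_two]
    push_cast
    rw [div_eq_mul_inv]
  rw [key, mellin_comp_rpow (fun u : ℝ => ((u : ℂ) + ((1/4:ℝ):ℂ))⁻¹) c 2]
  have hre1 : 0 < (c/2).re := by simp [Complex.div_ofNat_re]; linarith
  have hre2 : (c/2).re < 1 := by simp [Complex.div_ofNat_re]; linarith
  have hmf : mellin (fun u : ℝ => ((u : ℂ) + ((1/4:ℝ):ℂ))⁻¹) (c / 2)
      = ((1/4:ℝ):ℂ) ^ (c/2 - 1) * (↑Real.pi / Complex.sin (↑Real.pi * (c/2))) := by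
    rw [← aux_two (c/2) hre1 hre2 (by norm_num : (0:ℝ) < 1/4), mellin]
    refine setIntegral_congr_fun measurableSet_Ioi fun u hu => ?_
    rw [smul_eq_mul]
    ring
  have hdiv : c / ((2:ℝ):ℂ) = c / 2 := by norm_num
  rw [hdiv, hmf]
  have e6 : ((1/4:ℝ):ℂ) ^ (c/2 - 1) = (2:ℂ) ^ (2 - c) := by
    rw [cpow_real_pos (1/4) (by norm_num), show ((2:ℂ)) = ((2:ℝ):ℂ) by norm_num,
      cpow_real_pos 2 (by norm_num)]
    congr 1
    rw [show (1/4 : ℝ) = (2:ℝ)⁻¹ ^ 2 by norm_num, Real.log_pow, Real.log_inv]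
    push_cast
    ring
  rw [e6]
  have e7 : (2:ℂ) ^ (2 - c) = 2 * (2:ℂ) ^ (1 - c) := by
    rw [show (2:ℂ) - c = 1 + (1 - c) by ring, Complex.cpow_add _ _ (two_ne_zero), Complex.cpow_one]
  rw [e7]
  have e8 : ↑Real.pi * (c/2) = ↑Real.pi * c / 2 := by ring
  rw [e8, abs_of_pos (by norm_num : (0:ℝ) < 2), real_smul]
  push_cast
  ring

lemma aux_integrable (c : ℂ) (h1 : 0 < c.re) (h2 : c.re < 2) :
    IntegrableOn (fun y : ℝ => (y:ℂ) ^ (c - 1) / ((y:ℂ)^2 + 1/4)) (Ioi 0) := by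
  have hne : ∀ y : ℝ, ((y:ℂ)^2 + 1/4) ≠ 0 := by
    intro y
    have : ((y:ℂ)^2 + 1/4) = ((y^2 + 1/4 : ℝ) : ℂ) := by push_cast; ring
    rw [this]
    exact_mod_cast (by positivity : (0:ℝ) < y^2 + 1/4).ne'
  have hnorm : ∀ y : ℝ, ‖((y:ℂ)^2 + 1/4)⁻¹‖ = (y^2 + 1/4)⁻¹ := by
    intro y
    have : ((y:ℂ)^2 + 1/4) = ((y^2 + 1/4 : ℝ) : ℂ) := by push_cast; ring
    rw [this, norm_inv, Complex.norm_real, Real.norm_eq_abs,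
      abs_of_pos (by positivity : (0:ℝ) < y^2 + 1/4)]
  have hcont : Continuous (fun y : ℝ => ((y:ℂ)^2 + 1/4)⁻¹) := by
    refine Continuous.inv₀ (by continuity) hne
  have hM : MellinConvergent (fun y : ℝ => ((y:ℂ)^2 + 1/4)⁻¹) c := by
    refine mellinConvergent_of_isBigO_rpow (a := 2) (b := 0)
      (hcont.locallyIntegrable.locallyIntegrableOn _) ?_ h2 ?_ h1
    · rw [Asymptotics.isBigO_iff]
      refine ⟨1, ?_⟩
      filter_upwards [Filter.eventually_ge_atTop (1:ℝ)] with t ht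
      rw [hnorm, one_mul, Real.norm_eq_abs, _root_.abs_of_nonneg (Real.rpow_nonneg (by linarith) _), Real.rpow_neg (by linarith), Real.rpow_two]
      rw [inv_le_inv₀ (by positivity) (by positivity)]
      nlinarith
    · rw [Asymptotics.isBigO_iff]
      refine ⟨4, ?_⟩
      filter_upwards [self_mem_nhdsWithin] with t (ht : (0:ℝ) < t)
      rw [hnorm, neg_zero, Real.rpow_zero, norm_one, mul_one,
        inv_le_iff_one_le_mul₀ (by positivity)]
      nlinarith
  have := hM
  rw [MellinConvergent] at this
  refine this.congr_fun (fun y hy => ?_) measurableSet_Ioi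
  simp only [smul_eq_mul]
  ring

theorem integral_J_value (s : ℂ) (hs1 : 0 < s.re) (hs2 : s.re < 1) :
    ∫ y in Ioi (0 : ℝ), 1 / ((I * (y : ℂ) - 1 / 2) * (y : ℂ) ^ s)
      = -I * (Real.pi : ℂ) * (2 : ℂ) ^ s * Complex.exp (-(I * (Real.pi : ℂ) * s / 2)) /
          Complex.sin ((Real.pi : ℂ) * s) := by
  have hc1a : 0 < (1 - s).re := by simp [Complex.sub_re]; linarith
  have hc1b : (1 - s).re < 2 := by simp [Complex.sub_re]; linarith
  have hc2a : 0 < (2 - s).re := by simp [Complex.sub_re]; linarith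
  have hc2b : (2 - s).re < 2 := by simp [Complex.sub_re]; linarith
  have hpt : ∀ y ∈ Ioi (0:ℝ), 1 / ((I * (y:ℂ) - 1/2) * (y:ℂ)^s)
      = (-(1/2:ℂ)) * ((y:ℂ)^((1-s)-1) / ((y:ℂ)^2 + 1/4))
        + (-I) * ((y:ℂ)^((2-s)-1) / ((y:ℂ)^2 + 1/4)) := by
    intro y hy
    have hy' : (0:ℝ) < y := hy
    have hyC : (y:ℂ) ≠ 0 := ofReal_ne_zero.mpr hy'.ne'
    have hA : (y:ℂ)^s ≠ 0 := by
      rw [Ne, Complex.cpow_eq_zero_iff]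
      tauto
    have hden : ((y:ℂ)^2 + 1/4) ≠ 0 := by
      have h : ((y:ℂ)^2 + 1/4) = ((y^2 + 1/4 : ℝ) : ℂ) := by push_cast; ring
      rw [h]
      exact_mod_cast (by positivity : (0:ℝ) < y^2 + 1/4).ne'
    have hfac : (I * (y:ℂ) - 1/2) ≠ 0 := by
      intro h
      have := congrArg Complex.re h
      simp [Complex.sub_re, Complex.mul_re] at this
    have hfac2 : (-(1/2:ℂ) - I * (y:ℂ)) ≠ 0 := by
      intro h
      have := congrArg Complex.re h
      simp [Complex.sub_re, Complex.mul_re] at this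
    have hmul : (I * (y:ℂ) - 1/2) * (-(1/2:ℂ) - I * (y:ℂ)) = (y:ℂ)^2 + 1/4 := by
      linear_combination (-(y:ℂ)^2) * Complex.I_sq
    have e1 : (y:ℂ)^((1-s)-1) = ((y:ℂ)^s)⁻¹ := by
      rw [show (1:ℂ)-s-1 = -s by ring, Complex.cpow_neg]
    have e2 : (y:ℂ)^((2-s)-1) = (y:ℂ) * ((y:ℂ)^s)⁻¹ := by
      rw [show (2:ℂ)-s-1 = 1 + -s by ring, Complex.cpow_add _ _ hyC, Complex.cpow_one,
        Complex.cpow_neg]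
    rw [e1, e2, mul_div_assoc', mul_div_assoc', ← add_div,
      div_eq_div_iff (mul_ne_zero hfac hA) hden]
    set A := (y:ℂ) ^ s with hAdef
    field_simp
    linear_combination ((16:ℂ) * (y:ℂ)^2) * Complex.I_sq
  rw [setIntegral_congr_fun measurableSet_Ioi hpt]
  have hint1 := (aux_integrable (1-s) hc1a hc1b).const_mul (-(1/2:ℂ))
  have hint2 := (aux_integrable (2-s) hc2a hc2b).const_mul (-I)
  rw [MeasureTheory.integral_add hint1 hint2, MeasureTheory.integral_const_mul,
    MeasureTheory.integral_const_mul, aux_three (1-s) hc1a hc1b, aux_three (2-s) hc2a hc2b]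
  -- now pure algebra
  have h1 : (1:ℂ) - (1 - s) = s := by ring
  have h2 : (1:ℂ) - (2 - s) = s - 1 := by ring
  rw [h1, h2]
  have h3 : (Real.pi:ℂ) * (1 - s) / 2 = (Real.pi:ℂ)/2 - (Real.pi:ℂ) * s / 2 := by ring
  have h4 : (Real.pi:ℂ) * (2 - s) / 2 = (Real.pi:ℂ) - (Real.pi:ℂ) * s / 2 := by ring
  rw [h3, h4, Complex.sin_pi_div_two_sub, Complex.sin_pi_sub]
  have h5 : (2:ℂ) ^ (s - 1) = (2:ℂ) ^ s / 2 := by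
    rw [Complex.cpow_sub _ _ two_ne_zero, Complex.cpow_one]
  have h6 : Complex.sin ((Real.pi:ℂ) * s)
      = 2 * Complex.sin ((Real.pi:ℂ) * s / 2) * Complex.cos ((Real.pi:ℂ) * s / 2) := by
    have := Complex.sin_two_mul ((Real.pi:ℂ) * s / 2)
    rw [show 2 * ((Real.pi:ℂ) * s / 2) = (Real.pi:ℂ) * s by ring] at this
    exact this
  have h7 : Complex.exp (-(I * (Real.pi:ℂ) * s / 2))
      = Complex.cos ((Real.pi:ℂ) * s / 2) - Complex.sin ((Real.pi:ℂ) * s / 2) * I := by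
    rw [show -(I * (Real.pi:ℂ) * s / 2) = (-((Real.pi:ℂ) * s / 2)) * I by ring,
      Complex.exp_mul_I, Complex.cos_neg, Complex.sin_neg]
    ring
  have hre : ((Real.pi:ℂ) * s / 2).re = Real.pi * s.re / 2 := by
    rw [Complex.div_ofNat_re, Complex.re_ofReal_mul]
  have hπ := Real.pi_pos
  have hsin : Complex.sin ((Real.pi:ℂ) * s / 2) ≠ 0 := by
    rw [Ne, Complex.sin_eq_zero_iff]
    rintro ⟨k, hk⟩
    have h := congrArg Complex.re hk
    rw [hre] at h
    simp [Complex.re_ofReal_mul] at h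
    have hk0 : (0:ℝ) < (k:ℝ) := by nlinarith
    have hk1 : (k:ℝ) < 1 := by nlinarith
    have hk0' : (0:ℤ) < k := by exact_mod_cast hk0
    have hk1' : k < 1 := by exact_mod_cast hk1
    omega
  have hcos : Complex.cos ((Real.pi:ℂ) * s / 2) ≠ 0 := by
    rw [Ne, Complex.cos_eq_zero_iff]
    rintro ⟨k, hk⟩
    have h := congrArg Complex.re hk
    rw [hre] at h
    simp [Complex.re_ofReal_mul, Complex.div_ofNat_re, Complex.add_re, Complex.mul_re] at h
    have hk0 : (0:ℝ) < 2*(k:ℝ)+1 := by nlinarith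
    have hk1 : 2*(k:ℝ)+1 < 1 := by nlinarith
    have hk0' : (0:ℤ) < 2*k+1 := by exact_mod_cast hk0
    have hk1' : 2*k+1 < 1 := by exact_mod_cast hk1
    omega
  rw [h5, h6, h7]
  set S := Complex.sin ((Real.pi:ℂ) * s / 2) with hS
  set C := Complex.cos ((Real.pi:ℂ) * s / 2) with hC
  set T := (2:ℂ) ^ s with hT
  field_simp
  linear_combination (-T * S) * Complex.I_sq
end

section
/- Let μ and λ be real numbers with 0 < λ and |μ| < λ, and let s be any complex number. Then (λ − i·μ)^(−s) + (λ + i·μ)^(−s) = 2·λ^(−s)·(1 + Σ_{n=1}^∞ (−1)^n · (s·(s+1)·⋯·(s+2n−1)/(2n)!) · (μ/λ)^(2n)), and the series on the right converges. -/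
open Complex Finset

private lemma ofReal_mul_cpow' {r : ℝ} (hr : 0 < r) {w : ℂ} (hw : w ≠ 0) (t : ℂ) :
    ((r : ℂ) * w) ^ t = (r : ℂ) ^ t * w ^ t := by
  have hr0 : (r : ℂ) ≠ 0 := ofReal_ne_zero.mpr hr.ne'
  rw [cpow_def_of_ne_zero (mul_ne_zero hr0 hw), cpow_def_of_ne_zero hr0,
    cpow_def_of_ne_zero hw, Complex.log_ofReal_mul hr hw, add_mul, exp_add,
    Complex.ofReal_log hr.le]

private lemma iteratedDeriv_one_add_cpow (a : ℂ) :
    ∀ n : ℕ, ∀ z ∈ Metric.ball (0 : ℂ) 1,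
      iteratedDeriv n (fun w : ℂ => (1 + w) ^ a) z
        = (∏ k ∈ range n, (a - (k : ℂ))) * (1 + z) ^ (a - (n : ℕ)) := by
  intro n
  induction n with
  | zero => intro z hz; simp
  | succ n ih =>
    intro z hz
    have heq : (iteratedDeriv n (fun w : ℂ => (1 + w) ^ a))
        =ᶠ[nhds z] (fun w => (∏ k ∈ range n, (a - (k : ℂ))) * (1 + w) ^ (a - (n : ℕ))) := by
      filter_upwards [Metric.isOpen_ball.mem_nhds hz] with w hw using ih w hw
    have hslit : (1 + z) ∈ slitPlane :=
      mem_slitPlane_of_norm_lt_one (by simpa using mem_ball_zero_iff.mp hz)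
    have hder : HasDerivAt (fun w : ℂ => (1 + w) ^ (a - (n : ℕ)))
        ((a - (n : ℕ)) * (1 + z) ^ (a - (n : ℕ) - 1)) z := by
      have h1 : HasDerivAt (fun w : ℂ => 1 + w) 1 z := (hasDerivAt_id z).const_add 1
      simpa using h1.cpow_const hslit
    rw [iteratedDeriv_succ, heq.deriv_eq,
      (hder.const_mul (∏ k ∈ range n, (a - (k : ℂ)))).deriv, prod_range_succ,
      show ((n + 1 : ℕ) : ℂ) = (n : ℂ) + 1 by push_cast; ring,
      show a - ((n : ℂ) + 1) = a - (n : ℕ) - 1 by ring]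
    ring

private lemma hasSum_one_add_cpow (a : ℂ) {z : ℂ} (hz : ‖z‖ < 1) :
    HasSum (fun n : ℕ => ((Nat.factorial n : ℂ))⁻¹ * (∏ k ∈ range n, (a - (k : ℂ))) * z ^ n)
      ((1 + z) ^ a) := by
  have hdiff : DifferentiableOn ℂ (fun w : ℂ => (1 + w) ^ a) (Metric.ball 0 1) := by
    intro w hw
    have hslit : (1 + w) ∈ slitPlane :=
      mem_slitPlane_of_norm_lt_one (mem_ball_zero_iff.mp hw)
    exact (((hasDerivAt_id w).const_add 1).cpow_const
      hslit).differentiableAt.differentiableWithinAt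
  have hz' : z ∈ Metric.ball (0 : ℂ) 1 := mem_ball_zero_iff.mpr hz
  have H := Complex.hasSum_taylorSeries_on_ball hdiff hz'
  convert H using 2 with n
  rotate_left
  rw [iteratedDeriv_one_add_cpow a n 0 (by simp)]
  simp [smul_eq_mul, one_cpow]
  ring
  rfl

theorem binomial_series_pair (lam μ : ℝ) (hlam : 0 < lam) (hμ : |μ| < lam) (s : ℂ) :
    Summable (fun n : ℕ+ =>
        (-1 : ℂ) ^ (n : ℕ) *
          ((∏ k ∈ Finset.range (2 * (n : ℕ)), (s + (k : ℂ))) /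
            (Nat.factorial (2 * (n : ℕ)) : ℂ)) * ((μ : ℂ) / (lam : ℂ)) ^ (2 * (n : ℕ))) ∧
      ((lam : ℂ) - I * (μ : ℂ)) ^ (-s) + ((lam : ℂ) + I * (μ : ℂ)) ^ (-s)
        = 2 * (lam : ℂ) ^ (-s) *
            (1 + ∑' n : ℕ+,
              (-1 : ℂ) ^ (n : ℕ) *
                ((∏ k ∈ Finset.range (2 * (n : ℕ)), (s + (k : ℂ))) /
                  (Nat.factorial (2 * (n : ℕ)) : ℂ)) * ((μ : ℂ) / (lam : ℂ)) ^ (2 * (n : ℕ))) := by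
  have hlam0 : (lam : ℂ) ≠ 0 := ofReal_ne_zero.mpr hlam.ne'
  set xc : ℂ := (μ : ℂ) / (lam : ℂ) with hxc
  have hxnorm : ‖I * xc‖ < 1 := by
    rw [norm_mul, Complex.norm_I, one_mul, hxc, norm_div]
    simp only [Complex.norm_real]
    rw [Real.norm_eq_abs, Real.norm_eq_abs, abs_of_pos hlam, div_lt_one hlam]
    exact hμ
  have hA := hasSum_one_add_cpow (-s) hxnorm
  have hB := hasSum_one_add_cpow (-s) (z := -(I * xc)) (by simpa using hxnorm)
  rw [show (1 : ℂ) + -(I * xc) = 1 - I * xc by ring] at hB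
  set A : ℂ := (1 + I * xc) ^ (-s) with hA_def
  set B : ℂ := (1 - I * xc) ^ (-s) with hB_def
  set u : ℕ → ℂ := fun m =>
    (-1 : ℂ) ^ m * ((∏ k ∈ Finset.range (2 * m), (s + (k : ℂ))) /
      (Nat.factorial (2 * m) : ℂ)) * xc ^ (2 * m) with hu_def
  set F : ℕ → ℂ := fun n =>
    ((Nat.factorial n : ℂ))⁻¹ * (∏ k ∈ range n, (-s - (k : ℂ))) * (I * xc) ^ n +
    ((Nat.factorial n : ℂ))⁻¹ * (∏ k ∈ range n, (-s - (k : ℂ))) * (-(I * xc)) ^ n with hF_def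
  have hABF : HasSum F (A + B) := hA.add hB
  have hprod : ∀ n : ℕ, (∏ k ∈ range n, (-s - (k : ℂ)))
      = (-1 : ℂ) ^ n * ∏ k ∈ range n, (s + (k : ℂ)) := by
    intro n
    calc (∏ k ∈ range n, (-s - (k : ℂ)))
        = ∏ k ∈ range n, (-1 : ℂ) * (s + (k : ℂ)) := by
          refine prod_congr rfl fun k _ => by ring
      _ = (-1 : ℂ) ^ n * ∏ k ∈ range n, (s + (k : ℂ)) := by
          rw [prod_mul_distrib, prod_const, card_range]
  have hinj : Function.Injective (fun m : ℕ => 2 * m) := fun a b h => by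
    simp only at h; omega
  have hsupp : ∀ n, n ∉ Set.range (fun m : ℕ => 2 * m) → F n = 0 := by
    intro n hn
    have hodd : Odd n := by
      rcases Nat.even_or_odd n with ⟨k, hk⟩ | ho
      · exact absurd ⟨k, show 2 * k = n by omega⟩ hn
      · exact ho
    rw [hF_def]
    simp only
    rw [hodd.neg_pow]
    ring
  have hkey : ∀ m : ℕ, F (2 * m) = 2 * u m := by
    intro m
    have e1 : (-(I * xc)) ^ (2 * m) = (I * xc) ^ (2 * m) := Even.neg_pow ⟨m, by ring⟩ _
    have e2 : (I * xc) ^ (2 * m) = (-1 : ℂ) ^ m * xc ^ (2 * m) := by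
      rw [mul_pow, pow_mul, I_sq]
    rw [hF_def, hu_def]
    simp only
    rw [e1, e2, hprod (2 * m), pow_mul, show ((-1 : ℂ) ^ 2) = 1 by ring, one_pow]
    ring
  have h2u : HasSum (fun m : ℕ => 2 * u m) (A + B) := by
    have h := (hinj.hasSum_iff hsupp).mpr hABF
    have he : (F ∘ fun m : ℕ => 2 * m) = fun m : ℕ => 2 * u m :=
      funext fun m => hkey m
    rwa [he] at h
  have hu : HasSum u ((A + B) / 2) := by
    have h := h2u.div_const 2
    have he : (fun m : ℕ => (2 * u m) / 2) = u := funext fun m => by ring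
    rwa [he] at h
  have hu0 : u 0 = 1 := by rw [hu_def]; simp
  have hshift : HasSum (fun n : ℕ => u (n + 1)) ((A + B) / 2 - 1) := by
    refine (hasSum_nat_add_iff 1).mpr ?_
    have : (A + B) / 2 - 1 + ∑ i ∈ range 1, u i = (A + B) / 2 := by
      simp [hu0]
    rwa [this]
  have hP : HasSum (fun n : ℕ+ => u (n : ℕ)) ((A + B) / 2 - 1) := by
    refine (Equiv.pnatEquivNat.symm.hasSum_iff).mp ?_
    have he : ((fun n : ℕ+ => u (n : ℕ)) ∘ ⇑Equiv.pnatEquivNat.symm)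
        = fun n : ℕ => u (n + 1) := by
      funext n
      simp [Equiv.pnatEquivNat]
    rwa [he]
  constructor
  · exact hP.summable
  · rw [hP.tsum_eq]
    have hne1 : (1 : ℂ) - I * xc ≠ 0 := by
      intro h
      have h1 : I * xc = 1 := by linear_combination -h
      rw [h1, norm_one] at hxnorm
      exact lt_irrefl _ hxnorm
    have hne2 : (1 : ℂ) + I * xc ≠ 0 := by
      intro h
      have h1 : I * xc = -1 := by linear_combination h
      rw [h1] at hxnorm
      simp at hxnorm
    have hL1 : ((lam : ℂ) - I * (μ : ℂ)) ^ (-s) = (lam : ℂ) ^ (-s) * B := by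
      rw [hB_def, ← ofReal_mul_cpow' hlam hne1]
      congr 1
      rw [hxc]; field_simp
    have hL2 : ((lam : ℂ) + I * (μ : ℂ)) ^ (-s) = (lam : ℂ) ^ (-s) * A := by
      rw [hA_def, ← ofReal_mul_cpow' hlam hne2]
      congr 1
      rw [hxc]; field_simp
    rw [hL1, hL2]
    ring
end
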